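/- Assume in addition that α is of class C², α(0) = 0, and that for some K > 0 the restriction of F to an open set V containing the segment {0} × [0, K] is a C² diffeomorphism onto an open set U ⊂ ℝ². Let m : ℝ → ℝ satisfy m' = α, and define Ψ : U → ℝ by Ψ(F(y₁, y₂)) = m(y₁) + y₂. Then 1 + x₂ α'(0) > 0 for all x₂ ∈ [0, K], and the two-dimensional Laplacian of Ψ satisfies ΔΨ(0, x₂) = α'(0) / (1 + x₂ α'(0)) for every x₂ ∈ [0, K]. -/

import Mathlib

/-!
Since `β² = 1 - α²`, the covector `(α(y₁), β(y₁))` composed with `DF(y)` is `(α(y₁), 1)`, the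
derivative of `m(y₁) + y₂`; as `DF(y)` is invertible (it has the left inverse `DG(F y)`), the chain
rule for `Ψ ∘ F` gives `∇Ψ = (α, β) ∘ G₁` on `U`. On the axis `α(0) = 0` and `β'(0) = 0`, so
`DF(0, t) = diag(1 + t α'(0), 1)`. Its invertibility makes `1 + t α'(0)` nonzero on `[0, K]`, hence
positive, and `DG(0, t) = diag(1 / (1 + t α'(0)), 1)`; so `∂₁(α ∘ G₁) = α'(0) / (1 + t α'(0))` and
`∂₂(β ∘ G₁) = 0` at `(0, t)`.
-/

open Set

/-- The characteristic map `F(y₁, y₂) = (y₁ + y₂ α(y₁), y₂ β(y₁))` with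
`β = √(1 - α²)`. -/
noncomputable def Fchar (α : ℝ → ℝ) (y : ℝ × ℝ) : ℝ × ℝ :=
  (y.1 + y.2 * α y.1, y.2 * Real.sqrt (1 - α y.1 ^ 2))

/-- The two-dimensional Laplacian of `f : ℝ² → ℝ`, written via iterated Fréchet
derivatives in the coordinate directions. -/
noncomputable def lap2 (f : ℝ × ℝ → ℝ) (x : ℝ × ℝ) : ℝ :=
    fderiv ℝ (fun y => fderiv ℝ f y (1, 0)) x (1, 0)
  + fderiv ℝ (fun y => fderiv ℝ f y (0, 1)) x (0, 1)

open Filter Topology Function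

section LeftInverse

variable {𝕜 E F Z : Type*} [NontriviallyNormedField 𝕜] [NormedAddCommGroup E] [NormedSpace 𝕜 E]
  [NormedAddCommGroup F] [NormedSpace 𝕜 F] [NormedAddCommGroup Z] [NormedSpace 𝕜 Z]

theorem Set.EqOn.eventuallyEq_comp_of_leftInvOn {X Y W : Type*} [TopologicalSpace Y]
    {f : X → Y} {g : Y → X} {h : Y → W} {φ : X → W} {s : Set X} {x : Y}
    (hhf : EqOn (h ∘ f) φ s) (hfs : IsOpen (f '' s)) (hgf : LeftInvOn g f s) (hx : x ∈ f '' s) :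
    h =ᶠ[𝓝 x] φ ∘ g := by
  filter_upwards [hfs.mem_nhds hx]
  rintro _ ⟨z, hz, rfl⟩
  simp only [comp_apply, hgf hz, ← hhf hz]

theorem HasFDerivAt.comp_eq_id_of_leftInvOn {f : E → F} {g : F → E} {f' : E →L[𝕜] F}
    {g' : F →L[𝕜] E} {s : Set E} {y : E} (hf : HasFDerivAt f f' y) (hg : HasFDerivAt g g' (f y))
    (hs : IsOpen s) (hgf : LeftInvOn g f s) (hy : y ∈ s) :
    g'.comp f' = ContinuousLinearMap.id 𝕜 E :=
  ((hg.comp y hf).congr_of_eventuallyEq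
    (eventually_of_mem (hs.mem_nhds hy) fun _ hz => (hgf hz).symm)).unique (hasFDerivAt_id y)

theorem HasFDerivAt.of_comp_eqOn_of_leftInvOn [FiniteDimensional 𝕜 E] {f g : E → E} {h : E → Z}
    {φ : E → Z} {f' : E →L[𝕜] E} {φ' L : E →L[𝕜] Z} {s : Set E} {y : E}
    (hf : HasFDerivAt f f' y) (hg : DifferentiableAt 𝕜 g (f y)) (hφ : HasFDerivAt φ φ' y)
    (hs : IsOpen s) (hfs : IsOpen (f '' s)) (hgf : LeftInvOn g f s) (hhf : EqOn (h ∘ f) φ s)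
    (hy : y ∈ s) (hL : L.comp f' = φ') :
    HasFDerivAt h L (f y) := by
  have hgf' : (fderiv 𝕜 g (f y)).comp f' = .id 𝕜 E :=
    hf.comp_eq_id_of_leftInvOn hg.hasFDerivAt hs hgf hy
  have hfg' : f'.comp (fderiv 𝕜 g (f y)) = .id 𝕜 E :=
    ContinuousLinearMap.coe_injective <|
      (LinearMap.comp_eq_id_comm _ _).mp congr(($hgf' : E →ₗ[𝕜] E))
  have hφg : HasFDerivAt (φ ∘ g) (φ'.comp (fderiv 𝕜 g (f y))) (f y) :=
    (hgf hy ▸ hφ).comp (f y) hg.hasFDerivAt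
  convert hφg.congr_of_eventuallyEq (hhf.eventuallyEq_comp_of_leftInvOn hfs hgf ⟨y, hy, rfl⟩)
  rw [← hL, ContinuousLinearMap.comp_assoc, hfg', ContinuousLinearMap.comp_id]

end LeftInverse

theorem HasDerivAt.sqrt_one_sub_sq {f : ℝ → ℝ} {f' x : ℝ} (hf : HasDerivAt f f' x)
    (hx : |f x| < 1) :
    HasDerivAt (fun s => √(1 - f s ^ 2)) (-(f x * f') / √(1 - f x ^ 2)) x := by
  have hpos : 0 < 1 - f x ^ 2 := by nlinarith [sq_abs (f x), abs_nonneg (f x)]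
  convert ((hf.fun_pow 2).const_sub 1).sqrt hpos.ne' using 1
  field_simp
  push_cast
  ring

noncomputable def coordForm (a b : ℝ) : ℝ × ℝ →L[ℝ] ℝ :=
  a • ContinuousLinearMap.fst ℝ ℝ ℝ + b • ContinuousLinearMap.snd ℝ ℝ ℝ

@[simp] theorem coordForm_apply (a b : ℝ) (v : ℝ × ℝ) : coordForm a b v = a * v.1 + b * v.2 := by
  simp [coordForm]

theorem lap2_eq_of_fderiv_eventuallyEq {Ψ p q : ℝ × ℝ → ℝ} {p' q' : ℝ × ℝ →L[ℝ] ℝ} {x : ℝ × ℝ}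
    (hΨ : fderiv ℝ Ψ =ᶠ[𝓝 x] fun x => coordForm (p x) (q x)) (hp : HasFDerivAt p p' x)
    (hq : HasFDerivAt q q' x) :
    lap2 Ψ x = p' (1, 0) + q' (0, 1) := by
  have h₁ : (fun y => fderiv ℝ Ψ y (1, 0)) =ᶠ[𝓝 x] p := hΨ.mono fun _ hy => by simp [hy]
  have h₂ : (fun y => fderiv ℝ Ψ y (0, 1)) =ᶠ[𝓝 x] q := hΨ.mono fun _ hy => by simp [hy]
  rw [lap2, h₁.fderiv_eq, h₂.fderiv_eq, hp.fderiv, hq.fderiv]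

noncomputable def fcharDeriv (α : ℝ → ℝ) (a : ℝ) (y : ℝ × ℝ) : ℝ × ℝ →L[ℝ] ℝ × ℝ :=
  (coordForm (1 + y.2 * a) (α y.1)).prod
    (coordForm (y.2 * (-(α y.1 * a) / √(1 - α y.1 ^ 2))) √(1 - α y.1 ^ 2))

section Fchar

variable {α : ℝ → ℝ} {a : ℝ}

theorem hasFDerivAt_Fchar {y : ℝ × ℝ} (ha : HasDerivAt α a y.1) (hy : |α y.1| < 1) :
    HasFDerivAt (Fchar α) (fcharDeriv α a y) y := by
  have hA : HasFDerivAt (fun y : ℝ × ℝ => α y.1) (a • ContinuousLinearMap.fst ℝ ℝ ℝ) y :=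
    ha.comp_hasFDerivAt y hasFDerivAt_fst
  have hB : HasFDerivAt (fun y : ℝ × ℝ => √(1 - α y.1 ^ 2))
      ((-(α y.1 * a) / √(1 - α y.1 ^ 2)) • ContinuousLinearMap.fst ℝ ℝ ℝ) y :=
    (ha.sqrt_one_sub_sq hy).comp_hasFDerivAt y hasFDerivAt_fst
  refine ((hasFDerivAt_fst.add (hasFDerivAt_snd.mul hA)).prodMk
    (hasFDerivAt_snd.mul hB)).congr_fderiv ?_
  ext <;> simp [fcharDeriv]

theorem fcharDeriv_zero_apply (hα0 : α 0 = 0) (t : ℝ) (v : ℝ × ℝ) :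
    fcharDeriv α a (0, t) v = ((1 + t * a) * v.1, v.2) := by
  simp [fcharDeriv, hα0]

theorem coordForm_comp_fcharDeriv {y : ℝ × ℝ} (hy : |α y.1| < 1) :
    (coordForm (α y.1) √(1 - α y.1 ^ 2)).comp (fcharDeriv α a y) = coordForm (α y.1) 1 := by
  have hpos : 0 < 1 - α y.1 ^ 2 := by nlinarith [sq_abs (α y.1), abs_nonneg (α y.1)]
  have hβ := Real.sq_sqrt hpos.le
  have hβ0 := (Real.sqrt_pos.mpr hpos).ne'
  ext <;> simp [fcharDeriv] <;> field_simp
  · ring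
  · linear_combination hβ

end Fchar

theorem one_add_mul_pos_of_ne_zero {a K t : ℝ} (h : ∀ s ∈ Icc 0 K, 1 + s * a ≠ 0)
    (ht : t ∈ Icc 0 K) : 0 < 1 + t * a := by
  by_contra! hle
  have ha : a < 0 := by nlinarith [ht.1]
  have hinv : a * a⁻¹ = 1 := mul_inv_cancel₀ ha.ne
  refine h (-a⁻¹) ⟨by nlinarith, by nlinarith [ht.2]⟩ (by linear_combination -hinv)

section Eikonal

variable {α : ℝ → ℝ} {V : Set (ℝ × ℝ)} {G : ℝ × ℝ → ℝ × ℝ}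

theorem hasFDerivAt_eikonal {m : ℝ → ℝ} {Ψ : ℝ × ℝ → ℝ} {a : ℝ} {y : ℝ × ℝ}
    (ha : HasDerivAt α a y.1) (hy1 : |α y.1| < 1) (hm : HasDerivAt m (α y.1) y.1)
    (hG : DifferentiableAt ℝ G (Fchar α y)) (hV : IsOpen V) (hU : IsOpen (Fchar α '' V))
    (hGF : LeftInvOn G (Fchar α) V) (hΨ : EqOn (Ψ ∘ Fchar α) (fun y => m y.1 + y.2) V)
    (hy : y ∈ V) :
    HasFDerivAt Ψ (coordForm (α y.1) √(1 - α y.1 ^ 2)) (Fchar α y) := by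
  have hφ : HasFDerivAt (fun y : ℝ × ℝ => m y.1 + y.2) (coordForm (α y.1) 1) y := by
    have hm₁ : HasFDerivAt (fun y : ℝ × ℝ => m y.1) (α y.1 • ContinuousLinearMap.fst ℝ ℝ ℝ) y :=
      hm.comp_hasFDerivAt y hasFDerivAt_fst
    exact (hm₁.add hasFDerivAt_snd).congr_fderiv (by ext <;> simp)
  exact (hasFDerivAt_Fchar ha hy1).of_comp_eqOn_of_leftInvOn hG hφ hV hU hGF hΨ hy
    (coordForm_comp_fcharDeriv hy1)

theorem fderiv_eventuallyEq_eikonal {m : ℝ → ℝ} {Ψ : ℝ × ℝ → ℝ} {x : ℝ × ℝ}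
    (hα : Differentiable ℝ α) (hα1 : ∀ s, |α s| < 1) (hm : ∀ s, HasDerivAt m (α s) s)
    (hG : DifferentiableOn ℝ G (Fchar α '' V)) (hV : IsOpen V) (hU : IsOpen (Fchar α '' V))
    (hGF : LeftInvOn G (Fchar α) V) (hΨ : EqOn (Ψ ∘ Fchar α) (fun y => m y.1 + y.2) V)
    (hx : x ∈ Fchar α '' V) :
    fderiv ℝ Ψ =ᶠ[𝓝 x] fun x => coordForm (α (G x).1) √(1 - α (G x).1 ^ 2) := by
  filter_upwards [hU.mem_nhds hx]
  rintro _ ⟨y, hy, rfl⟩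
  have hGy : DifferentiableAt ℝ G (Fchar α y) :=
    (hG _ (mem_image_of_mem _ hy)).differentiableAt (hU.mem_nhds (mem_image_of_mem _ hy))
  rw [hGF hy, (hasFDerivAt_eikonal (hα y.1).hasDerivAt (hα1 y.1) (hm y.1) hGy hV hU hGF hΨ
    hy).fderiv]

theorem hasFDerivAt_comp_fst_of_leftInvOn_Fchar {f : ℝ → ℝ} {a c t : ℝ} (hα0 : α 0 = 0)
    (ha : HasDerivAt α a 0) (hf : HasDerivAt f c 0) (hG : DifferentiableAt ℝ G (0, t))
    (hV : IsOpen V) (hU : IsOpen (Fchar α '' V)) (hGF : LeftInvOn G (Fchar α) V)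
    (ht : (0, t) ∈ V) (hd : 1 + t * a ≠ 0) :
    HasFDerivAt (fun x => f (G x).1) (coordForm (c / (1 + t * a)) 0) (0, t) := by
  have hF : Fchar α (0, t) = (0, t) := by simp [Fchar, hα0]
  have hf₁ : HasFDerivAt (fun y : ℝ × ℝ => f y.1) (c • ContinuousLinearMap.fst ℝ ℝ ℝ) (0, t) :=
    hf.comp_hasFDerivAt ((0, t) : ℝ × ℝ) hasFDerivAt_fst
  rw [← hF]
  refine (hasFDerivAt_Fchar (y := (0, t)) ha (by simp [hα0])).of_comp_eqOn_of_leftInvOn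
    (by rwa [hF]) hf₁ hV hU hGF (fun y hy => by simp [hGF hy]) ht ?_
  ext <;> simp [fcharDeriv_zero_apply hα0]
  field_simp

end Eikonal

theorem laplacian_eikonal_on_axis_general
    (α : ℝ → ℝ) (hα : ContDiff ℝ 2 α) (hα1 : ∀ s, |α s| < 1) (hα0 : α 0 = 0)
    (K : ℝ)
    (V U : Set (ℝ × ℝ)) (hV : IsOpen V) (hU : IsOpen U)
    (hseg : ({(0 : ℝ)} : Set ℝ) ×ˢ Icc (0 : ℝ) K ⊆ V)
    (hFV : Fchar α '' V = U)
    (G : ℝ × ℝ → ℝ × ℝ) (hG : ContDiffOn ℝ 2 G U)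
    (hGF : ∀ y ∈ V, G (Fchar α y) = y)
    (m : ℝ → ℝ) (hm : ∀ s, HasDerivAt m (α s) s)
    (Ψ : ℝ × ℝ → ℝ) (hΨ : ∀ y ∈ V, Ψ (Fchar α y) = m y.1 + y.2) :
    (∀ x₂ ∈ Icc (0 : ℝ) K, 0 < 1 + x₂ * deriv α 0)
    ∧ (∀ x₂ ∈ Icc (0 : ℝ) K, lap2 Ψ (0, x₂) = deriv α 0 / (1 + x₂ * deriv α 0)) := by
  subst hFV
  have hαd : Differentiable ℝ α := hα.differentiable (by norm_num)
  have hGd : DifferentiableOn ℝ G (Fchar α '' V) := hG.differentiableOn (by norm_num)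
  have hGF' : LeftInvOn G (Fchar α) V := fun y hy => hGF y hy
  have hF : ∀ t, Fchar α (0, t) = (0, t) := fun t => by simp [Fchar, hα0]
  have hax : ∀ t ∈ Icc 0 K, ((0 : ℝ), t) ∈ V := fun t ht => hseg ⟨rfl, ht⟩
  have hGax : ∀ t ∈ Icc 0 K, DifferentiableAt ℝ G (0, t) := fun t ht =>
    have hU' : ((0 : ℝ), t) ∈ Fchar α '' V := ⟨_, hax t ht, hF t⟩
    (hGd _ hU').differentiableAt (hU.mem_nhds hU')
  have hne : ∀ t ∈ Icc 0 K, 1 + t * deriv α 0 ≠ 0 := by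
    intro t ht hd
    have hid := (hasFDerivAt_Fchar (y := (0, t)) (hαd 0).hasDerivAt (by simp [hα0])
      ).comp_eq_id_of_leftInvOn (hF t ▸ (hGax t ht).hasFDerivAt) hV hGF' (hax t ht)
    simpa [fcharDeriv_zero_apply hα0, hd, Prod.mk_zero_zero, Prod.ext_iff] using
      congr($hid (1, 0))
  refine ⟨fun t ht => one_add_mul_pos_of_ne_zero hne ht, fun t ht => ?_⟩
  have hgrad := fderiv_eventuallyEq_eikonal hαd hα1 hm hGd hV hU hGF' (fun y hy => hΨ y hy)
    ⟨_, hax t ht, hF t⟩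
  have hα' : HasDerivAt α (deriv α 0) 0 := (hαd 0).hasDerivAt
  have h₁ := hasFDerivAt_comp_fst_of_leftInvOn_Fchar hα0 hα' hα' (hGax t ht) hV hU hGF'
    (hax t ht) (hne t ht)
  have h₂ := hasFDerivAt_comp_fst_of_leftInvOn_Fchar hα0 hα'
    (hα'.sqrt_one_sub_sq (by simp [hα0])) (hGax t ht) hV hU hGF' (hax t ht) (hne t ht)
  rw [lap2_eq_of_fderiv_eventuallyEq hgrad h₁ h₂]
  simp [hα0]

/-- **Laplacian of the eikonal solution along the central ray.**
Let `α` be `C²` with `|α| < 1` and `α(0) = 0`, let `K > 0`, and suppose `F = Fchar α`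
restricted to an open set `V ⊇ {0} × [0, K]` is a `C²` diffeomorphism onto an open set
`U` (with `C²` inverse `G`). Let `m' = α` and define `Ψ` on `U` by
`Ψ(F(y₁, y₂)) = m(y₁) + y₂`. Then `1 + x₂ α'(0) > 0` for `x₂ ∈ [0, K]`, and the
two-dimensional Laplacian satisfies `ΔΨ(0, x₂) = α'(0) / (1 + x₂ α'(0))` there. -/
theorem laplacian_eikonal_on_axis
    (α : ℝ → ℝ) (hα : ContDiff ℝ 2 α) (hα1 : ∀ s, |α s| < 1) (hα0 : α 0 = 0)
    (K : ℝ) (hK : 0 < K)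
    (V U : Set (ℝ × ℝ)) (hV : IsOpen V) (hU : IsOpen U)
    (hseg : ({(0 : ℝ)} : Set ℝ) ×ˢ Icc (0 : ℝ) K ⊆ V)
    (hFV : Fchar α '' V = U) (hFinj : InjOn (Fchar α) V)
    (G : ℝ × ℝ → ℝ × ℝ) (hG : ContDiffOn ℝ 2 G U)
    (hGF : ∀ y ∈ V, G (Fchar α y) = y)
    (m : ℝ → ℝ) (hm : ∀ s, HasDerivAt m (α s) s)
    (Ψ : ℝ × ℝ → ℝ) (hΨ : ∀ y ∈ V, Ψ (Fchar α y) = m y.1 + y.2) :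
    (∀ x₂ ∈ Icc (0 : ℝ) K, 0 < 1 + x₂ * deriv α 0)
    ∧ (∀ x₂ ∈ Icc (0 : ℝ) K, lap2 Ψ (0, x₂) = deriv α 0 / (1 + x₂ * deriv α 0)) :=
  laplacian_eikonal_on_axis_general α hα hα1 hα0 K V U hV hU hseg hFV G hG hGF m hm Ψ hΨ
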